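/- For every κ > 0, every t > 0 and every x ∈ ℝ, the one-dimensional Mehler kernel satisfies the exact row-integral identity ∫_ℝ G_κ(x,y;t) dy = (cosh(κt))^{−1/2} · exp(−(κ/2)·x²·tanh(κt)); in particular ∫_ℝ G_κ(x,y;t) dy ≤ (cosh(κt))^{−1/2} for every x ∈ ℝ. -/

import Mathlib

open Real MeasureTheory

/-- The one-dimensional Mehler kernel. Here `cosh/sinh` plays the role of `coth`. -/
noncomputable def mehler (κ t x y : ℝ) : ℝ :=
  Real.sqrt (κ / (2 * Real.pi * Real.sinh (κ * t))) *
    Real.exp (-(κ / 4) * ((x + y) ^ 2 * Real.tanh (κ * t / 2) +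
      (x - y) ^ 2 * (Real.cosh (κ * t / 2) / Real.sinh (κ * t / 2))))

/-! By the half-angle formulas the exponent of the kernel is the quadratic
`-(κ / (2 sinh s)) ((x² + y²) cosh s - 2 x y)` in `y`, with `s = κ t`. Completing the square turns
the row integral into a Gaussian integral; the prefactors combine to `(cosh s)^(-1/2)` and, by
`cosh² s - sinh² s = 1`, the maximum of the exponent over `y` is `-(κ / 2) x² tanh s ≤ 0`. -/

/-- For `a < 0` both sides vanish: the square root is `0` and the integrand is not integrable. -/
theorem integral_exp_quadratic {a : ℝ} (ha : a ≠ 0) (b c : ℝ) :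
    ∫ y : ℝ, exp (-a * y ^ 2 + b * y + c) = √(π / a) * exp (b ^ 2 / (4 * a) + c) := by
  have h_complete_square (y : ℝ) :
      -a * y ^ 2 + b * y + c = -a * (y - b / (2 * a)) ^ 2 + (b ^ 2 / (4 * a) + c) := by
    field_simp
    ring
  simp_rw [h_complete_square, exp_add, integral_mul_const,
    integral_sub_right_eq_self (fun y ↦ exp (-a * y ^ 2)), integral_gaussian]

theorem Real.tanh_nonneg {x : ℝ} (hx : 0 ≤ x) : 0 ≤ tanh x := by
  rw [tanh_eq_sinh_div_cosh]
  exact div_nonneg (sinh_nonneg_iff.mpr hx) (cosh_pos x).le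

theorem mehler_exponent_eq_quadratic (κ x y : ℝ) {s : ℝ} (hs : s ≠ 0) :
    -(κ / 4) * ((x + y) ^ 2 * tanh (s / 2) + (x - y) ^ 2 * (cosh (s / 2) / sinh (s / 2))) =
      -(κ * cosh s / (2 * sinh s)) * y ^ 2 + κ * x / sinh s * y +
        -(κ * cosh s / (2 * sinh s)) * x ^ 2 := by
  have hsh : sinh (s / 2) ≠ 0 := sinh_ne_zero.mpr (by positivity)
  have hch : cosh (s / 2) ≠ 0 := (cosh_pos _).ne'
  rw [show s = 2 * (s / 2) by ring, sinh_two_mul, cosh_two_mul, tanh_eq_sinh_div_cosh]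
  field_simp
  linear_combination (8 * κ * x * y) * cosh_sq_sub_sinh_sq (s / 2)

theorem mehler_eq (κ t x y : ℝ) (hκt : κ * t ≠ 0) :
    mehler κ t x y = √(κ / (2 * π * sinh (κ * t))) *
      exp (-(κ * cosh (κ * t) / (2 * sinh (κ * t))) * y ^ 2 + κ * x / sinh (κ * t) * y +
        -(κ * cosh (κ * t) / (2 * sinh (κ * t))) * x ^ 2) := by
  rw [mehler, mehler_exponent_eq_quadratic κ x y hκt]

theorem sqrt_mehler_prefactor_mul_sqrt {κ s : ℝ} (hκ : 0 < κ) (hs : 0 < s) :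
    √(κ / (2 * π * sinh s)) * √(π / (κ * cosh s / (2 * sinh s))) = cosh s ^ (-(1 : ℝ) / 2) := by
  have hsh : 0 < sinh s := sinh_pos_iff.mpr hs
  have h_product : κ / (2 * π * sinh s) * (π / (κ * cosh s / (2 * sinh s))) = (cosh s)⁻¹ := by
    field_simp
  rw [← sqrt_mul (by positivity), h_product, neg_div, rpow_neg (cosh_pos s).le, ← sqrt_eq_rpow,
    sqrt_inv]

theorem mehler_exponent_max_eq (κ x s : ℝ) :
    (κ * x / sinh s) ^ 2 / (4 * (κ * cosh s / (2 * sinh s))) +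
        -(κ * cosh s / (2 * sinh s)) * x ^ 2 = -(κ / 2) * x ^ 2 * tanh s := by
  rcases eq_or_ne s 0 with rfl | hs
  · simp
  have hsh : sinh s ≠ 0 := sinh_ne_zero.mpr hs
  have hch : cosh s ≠ 0 := (cosh_pos _).ne'
  rw [tanh_eq_sinh_div_cosh]
  field_simp
  linear_combination (-4 * κ * x ^ 2) * cosh_sq_sub_sinh_sq s

/-- Exact row-integral identity for the one-dimensional Mehler kernel, and the resulting
uniform bound. -/
theorem mehler_row_integral (κ t x : ℝ) (hκ : 0 < κ) (ht : 0 < t) :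
    (∫ y : ℝ, mehler κ t x y =
        (Real.cosh (κ * t)) ^ (-(1 : ℝ) / 2) *
          Real.exp (-(κ / 2) * x ^ 2 * Real.tanh (κ * t))) ∧
      ∫ y : ℝ, mehler κ t x y ≤ (Real.cosh (κ * t)) ^ (-(1 : ℝ) / 2) := by
  have hκt : 0 < κ * t := mul_pos hκ ht
  have ha : κ * cosh (κ * t) / (2 * sinh (κ * t)) ≠ 0 :=
    (div_pos (mul_pos hκ (cosh_pos _)) (mul_pos two_pos (sinh_pos_iff.mpr hκt))).ne'
  have h_integral : ∫ y : ℝ, mehler κ t x y =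
      cosh (κ * t) ^ (-(1 : ℝ) / 2) * exp (-(κ / 2) * x ^ 2 * tanh (κ * t)) := by
    simp_rw [mehler_eq κ t x _ hκt.ne', integral_const_mul, integral_exp_quadratic ha,
      ← mul_assoc, sqrt_mehler_prefactor_mul_sqrt hκ hκt, mehler_exponent_max_eq]
  refine ⟨h_integral, h_integral ▸ mul_le_of_le_one_right (by positivity) ?_⟩
  rw [exp_le_one_iff, neg_mul, neg_mul, neg_nonpos]
  exact mul_nonneg (by positivity) (tanh_nonneg hκt.le)
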